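/- Let k,l ≥ 2, n ≥ 1, and let (c_i)_{i≥1} be a (k,l)-admissible word whose first n−1 terms vanish. Let (d_i) be the successor of (c_i) in the lexicographic order ≺ restricted to (k,l)-admissible words with first n−1 terms zero. Then: (1) if there exists j ≥ n with c_i = o_i + [i = j] for all n ≤ i ≤ j, then d_n = ⋯ = d_j = 0, d_{j+1} = c_{j+1} + 1, and d_i = c_i for i ≥ j+2; (2) otherwise d_n = c_n + 1 and d_i = c_i for i ≥ n+1. -/

import Mathlib

/-!
Write `o` for `klCoeff k l`. The successor of `c` is the least word above `c` that agrees with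
`c` beyond some position `p`, has `c p + 1` at `p` and zeros below `p`; it remains to find the
smallest admissible choice of `p ≥ n`. Raising position `p` creates a forbidden pattern exactly
when `c` runs `o p, o (p+1), …, o (q-1), o q + 1` on `[p, q]` for some `q ≥ p`. If there is no
such run at `p = n`, then `p = n` works, and any word strictly between `c` and the raised word
would differ from `c` only below `n`, where all words vanish. If `c` runs from `n` to `j`, then
`c j = o j + 1` rules out every run starting at `j + 1` (it would extend to a forbidden pattern
starting at `j`), so `p = j + 1` works. A word strictly between would exceed `c` at some
`q ∈ [n, j)`, and together with the run of `c` up to `j` this is a forbidden pattern from `q` to `j`.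
-/

/-- The alternating coefficient sequence: `l - 2` at odd indices, `k - 2` at even ones. -/
def klCoeff (k l : ℕ) (i : ℕ) : ℕ := if i % 2 = 1 then l - 2 else k - 2

/-- A forbidden pattern in a word. -/
def Forbidden (k l : ℕ) (c : ℕ → ℕ) : Prop :=
  ∃ i j : ℕ, 1 ≤ i ∧ i < j ∧
    ∀ h : ℕ, i ≤ h → h ≤ j → c h = klCoeff k l h + (if h = i ∨ h = j then 1 else 0)

/-- The set of (k,l)-admissible words (indexed from 1; position 0 is unused). -/
def Admissible (k l : ℕ) : Set (ℕ → ℕ) :=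
  {c | c 0 = 0 ∧ (∃ N : ℕ, ∀ i : ℕ, N ≤ i → c i = 0) ∧
       (∀ i : ℕ, 1 ≤ i → c i ≤ klCoeff k l i + 1) ∧ ¬Forbidden k l c}

/-- The order `≺`: words compared at the highest index of disagreement. -/
def Prec (c d : ℕ → ℕ) : Prop := ∃ n : ℕ, c n < d n ∧ ∀ i : ℕ, n < i → c i = d i

/-- Admissible words whose first `n - 1` terms vanish. -/
def AdmissibleFrom (k l n : ℕ) : Set (ℕ → ℕ) :=
  {c | c ∈ Admissible k l ∧ ∀ i : ℕ, 1 ≤ i → i < n → c i = 0}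

lemma prec_asymm {c d : ℕ → ℕ} (hcd : Prec c d) (hdc : Prec d c) : False := by
  obtain ⟨p, hp, hpa⟩ := hcd
  obtain ⟨m, hm, hma⟩ := hdc
  rcases lt_trichotomy p m with h | rfl | h
  · rw [hpa m h] at hm; omega
  · omega
  · rw [hma p h] at hp; omega

/-- The least word above `c` that agrees with `c` beyond position `p` and exceeds it at `p`. -/
def raiseAt (c : ℕ → ℕ) (p i : ℕ) : ℕ := if i < p then 0 else if i = p then c p + 1 else c i

section raiseAt

variable {c : ℕ → ℕ} {p i : ℕ}

lemma raiseAt_of_lt (h : i < p) : raiseAt c p i = 0 := if_pos h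

lemma raiseAt_self (c : ℕ → ℕ) (p : ℕ) : raiseAt c p p = c p + 1 := by simp [raiseAt]

lemma raiseAt_of_gt (h : p < i) : raiseAt c p i = c i := by
  simp [raiseAt, Nat.not_lt.2 h.le, h.ne']

lemma prec_raiseAt (c : ℕ → ℕ) (p : ℕ) : Prec c (raiseAt c p) :=
  ⟨p, by rw [raiseAt_self]; omega, fun _ hi => (raiseAt_of_gt hi).symm⟩

lemma exists_lt_of_prec_raiseAt {f : ℕ → ℕ} (hcf : Prec c f) (hf : Prec f (raiseAt c p)) :
    ∃ q < p, c q < f q ∧ ∀ i, q < i → f i = c i := by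
  obtain ⟨m, hm, hma⟩ := hf
  rcases lt_trichotomy m p with hmp | rfl | hpm
  · rw [raiseAt_of_lt hmp] at hm; omega
  · rw [raiseAt_self] at hm
    have hfc : ∀ i, m < i → f i = c i := fun i hi => (hma i hi).trans (raiseAt_of_gt hi)
    obtain ⟨q, hq, hqa⟩ := hcf
    refine ⟨q, ?_, hq, fun i hi => (hqa i hi).symm⟩
    rcases lt_trichotomy q m with h | rfl | h
    · exact h
    · omega
    · rw [hfc q h] at hq; omega
  · rw [raiseAt_of_gt hpm] at hm
    exact (prec_asymm hcf ⟨m, hm, fun i hi => (hma i hi).trans (raiseAt_of_gt (hpm.trans hi))⟩).elim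

lemma eq_raiseAt_of_isSucc {S : Set (ℕ → ℕ)} {d : ℕ → ℕ} (hd : d ∈ S) (hcd : Prec c d)
    (hsucc : ∀ e ∈ S, Prec c e → e = d ∨ Prec d e) (hraise : raiseAt c p ∈ S)
    (hgap : ∀ f ∈ S, ∀ q < p, c q < f q → (∀ i, q < i → f i = c i) → False) :
    d = raiseAt c p := by
  rcases hsucc _ hraise (prec_raiseAt c p) with h | h
  · exact h.symm
  · obtain ⟨q, hqp, hq, hqa⟩ := exists_lt_of_prec_raiseAt hcd h
    exact (hgap d hd q hqp hq hqa).elim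

end raiseAt

/-- The tail, from position `p` on, of a forbidden pattern ending at `q`. -/
def PatternTail (k l : ℕ) (c : ℕ → ℕ) (p q : ℕ) : Prop :=
  ∀ i, p ≤ i → i ≤ q → c i = klCoeff k l i + if i = q then 1 else 0

section PatternTail

variable {k l : ℕ} {c f : ℕ → ℕ} {p q : ℕ}

lemma PatternTail.mono {p' : ℕ} (ht : PatternTail k l c p q) (hp : p ≤ p') :
    PatternTail k l c p' q :=
  fun i hi => ht i (hp.trans hi)

lemma PatternTail.congr (ht : PatternTail k l c p q) (hfc : ∀ i, p ≤ i → f i = c i) :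
    PatternTail k l f p q :=
  fun i hi hiq => (hfc i hi).trans (ht i hi hiq)

lemma forbidden_of_patternTail (hp : 1 ≤ p) (hpq : p < q) (hcp : c p = klCoeff k l p + 1)
    (ht : PatternTail k l c (p + 1) q) : Forbidden k l c := by
  refine ⟨p, q, hp, hpq, fun i hpi hiq => ?_⟩
  rcases hpi.eq_or_lt with rfl | hpi
  · simpa using hcp
  · rw [ht i hpi hiq]
    by_cases hiq : i = q <;> simp [hiq, hpi.ne']

lemma forbidden_raiseAt (h : Forbidden k l (raiseAt c p)) :
    Forbidden k l c ∨ ∃ q, p ≤ q ∧ PatternTail k l c p q := by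
  obtain ⟨r, q, hr, hrq, hpat⟩ := h
  have hcr : raiseAt c p r = klCoeff k l r + 1 := by simpa using hpat r le_rfl hrq.le
  rcases lt_trichotomy r p with hrp | rfl | hpr
  · rw [raiseAt_of_lt hrp] at hcr; omega
  · refine Or.inr ⟨q, hrq.le, fun i hri hiq => ?_⟩
    rcases hri.eq_or_lt with rfl | hri
    · rw [raiseAt_self] at hcr
      simp [hrq.ne]
      omega
    · rw [← raiseAt_of_gt (c := c) hri, hpat i hri.le hiq]
      by_cases hiq : i = q <;> simp [hiq, hri.ne']
  · exact Or.inl ⟨r, q, hr, hrq, fun i hri hiq => by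
      rw [← raiseAt_of_gt (c := c) (hpr.trans_le hri)]; exact hpat i hri hiq⟩

end PatternTail

section Admissible

variable {k l n p : ℕ} {c : ℕ → ℕ}

lemma apply_eq_zero_of_mem_admissibleFrom (hc : c ∈ AdmissibleFrom k l n) {i : ℕ} (hi : i < n) :
    c i = 0 := by
  rcases Nat.eq_zero_or_pos i with rfl | hi0
  · exact hc.1.1
  · exact hc.2 i hi0 hi

lemma raiseAt_mem_admissible (hc : c ∈ Admissible k l) (hp : 1 ≤ p)
    (htail : ∀ q, p ≤ q → ¬PatternTail k l c p q) : raiseAt c p ∈ Admissible k l := by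
  obtain ⟨-, ⟨N, hN⟩, hcb, hcf⟩ := hc
  have hcp : c p ≤ klCoeff k l p := by
    by_contra hcp
    refine htail p le_rfl fun i hpi hip => ?_
    obtain rfl := le_antisymm hip hpi
    have := hcb i hp
    simp only [if_true]
    omega
  refine ⟨raiseAt_of_lt hp, ⟨max N (p + 1), fun i hi => ?_⟩, fun i hi => ?_, fun hf => ?_⟩
  · rw [raiseAt_of_gt (by omega)]
    exact hN i (le_of_max_le_left hi)
  · rcases lt_trichotomy i p with hip | rfl | hpi
    · rw [raiseAt_of_lt hip]; omega
    · rw [raiseAt_self]; omega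
    · rw [raiseAt_of_gt hpi]; exact hcb i hi
  · obtain hf | ⟨q, hpq, ht⟩ := forbidden_raiseAt hf
    exacts [hcf hf, htail q hpq ht]

lemma raiseAt_mem_admissibleFrom (hc : c ∈ AdmissibleFrom k l n) (hp : 1 ≤ p) (hnp : n ≤ p)
    (htail : ∀ q, p ≤ q → ¬PatternTail k l c p q) : raiseAt c p ∈ AdmissibleFrom k l n :=
  ⟨raiseAt_mem_admissible hc.1 hp htail, fun _ _ hi => raiseAt_of_lt (by omega)⟩

end Admissible

theorem successor_description_general
    (k l : ℕ) (n : ℕ) (hn : 1 ≤ n)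
    (c d : ℕ → ℕ)
    (hc : c ∈ AdmissibleFrom k l n)
    (hd : d ∈ AdmissibleFrom k l n)
    (hcd : Prec c d)
    (hsucc : ∀ e ∈ AdmissibleFrom k l n, Prec c e → e = d ∨ Prec d e) :
    (∀ j : ℕ, n ≤ j →
      (∀ i : ℕ, n ≤ i → i ≤ j → c i = klCoeff k l i + (if i = j then 1 else 0)) →
        ((∀ i : ℕ, n ≤ i → i ≤ j → d i = 0) ∧ d (j + 1) = c (j + 1) + 1 ∧
          ∀ i : ℕ, j + 2 ≤ i → d i = c i)) ∧
    ((¬ ∃ j : ℕ, n ≤ j ∧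
        ∀ i : ℕ, n ≤ i → i ≤ j → c i = klCoeff k l i + (if i = j then 1 else 0)) →
      (d n = c n + 1 ∧ ∀ i : ℕ, n + 1 ≤ i → d i = c i)) := by
  refine ⟨fun j hnj hrun => ?_, fun hnorun => ?_⟩
  · have hrun : PatternTail k l c n j := hrun
    have hcj : c j = klCoeff k l j + 1 := by simpa using hrun j hnj le_rfl
    have hraise := raiseAt_mem_admissibleFrom hc (by omega) (by omega) fun q _ ht =>
      hc.1.2.2.2 (forbidden_of_patternTail (by omega) (by omega) hcj ht)
    obtain rfl : d = raiseAt c (j + 1) := by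
      refine eq_raiseAt_of_isSucc hd hcd hsucc hraise fun f hf q hqj hcf hfc => ?_
      have hnq : n ≤ q := by
        by_contra hqn
        rw [apply_eq_zero_of_mem_admissibleFrom hf (by omega)] at hcf
        omega
      have hcq := hrun q hnq (by omega)
      have hfq := hf.1.2.2.1 q (by omega)
      have hqj : q ≠ j := by rintro rfl; simp only [if_true] at hcq; omega
      rw [if_neg hqj] at hcq
      exact hf.1.2.2.2 (forbidden_of_patternTail (p := q) (by omega) (by omega) (by omega)
        ((hrun.mono (by omega)).congr fun i hi => hfc i (by omega)))
    exact ⟨fun i _ hi => raiseAt_of_lt (by omega), raiseAt_self c (j + 1),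
      fun i hi => raiseAt_of_gt (by omega)⟩
  · have hraise := raiseAt_mem_admissibleFrom hc hn le_rfl fun q hq ht => hnorun ⟨q, hq, ht⟩
    obtain rfl : d = raiseAt c n :=
      eq_raiseAt_of_isSucc hd hcd hsucc hraise fun f hf q hq hcf _ => by
        rw [apply_eq_zero_of_mem_admissibleFrom hf hq] at hcf
        omega
    exact ⟨raiseAt_self c n, fun i hi => raiseAt_of_gt (by omega)⟩

/-- description of the successor of an admissible word with first
`n - 1` terms zero, in the order `≺`. -/
theorem successor_description
    (k l : ℕ) (hk : 2 ≤ k) (hl : 2 ≤ l) (n : ℕ) (hn : 1 ≤ n)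
    (c d : ℕ → ℕ)
    (hc : c ∈ AdmissibleFrom k l n)
    (hd : d ∈ AdmissibleFrom k l n)
    (hcd : Prec c d)
    (hsucc : ∀ e ∈ AdmissibleFrom k l n, Prec c e → e = d ∨ Prec d e) :
    (∀ j : ℕ, n ≤ j →
      (∀ i : ℕ, n ≤ i → i ≤ j → c i = klCoeff k l i + (if i = j then 1 else 0)) →
        ((∀ i : ℕ, n ≤ i → i ≤ j → d i = 0) ∧ d (j + 1) = c (j + 1) + 1 ∧
          ∀ i : ℕ, j + 2 ≤ i → d i = c i)) ∧
    ((¬ ∃ j : ℕ, n ≤ j ∧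
        ∀ i : ℕ, n ≤ i → i ≤ j → c i = klCoeff k l i + (if i = j then 1 else 0)) →
      (d n = c n + 1 ∧ ∀ i : ℕ, n + 1 ≤ i → d i = c i)) :=
  successor_description_general k l n hn c d hc hd hcd hsucc
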